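/- If Σ_{σ ∈ T, σ ≠ root} p^{|σ|} < ∞, then almost surely Σ_{σ ∈ T, σ ≠ root} C_σ < ∞. -/

import Mathlib

open MeasureTheory ProbabilityTheory Filter
open scoped ENNReal NNReal

/-- An infinite, locally finite rooted tree, modeled as a set of finite sequences of
natural numbers: it contains the empty sequence (the root), is closed under taking
prefixes, is infinite, and every vertex has only finitely many one-step extensions. -/
structure LFTree : Type where
  carrier : Set (List ℕ)
  root_mem : [] ∈ carrier
  prefix_closed : ∀ ⦃σ : List ℕ⦄, σ ∈ carrier → ∀ ⦃τ : List ℕ⦄, τ <+: σ → τ ∈ carrier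
  infinite : carrier.Infinite
  locallyFinite : ∀ σ ∈ carrier, {n : ℕ | σ ++ [n] ∈ carrier}.Finite

namespace LFTree

/-- The length-`n` initial prefix of an infinite sequence. -/
def pref (s : ℕ → ℕ) (n : ℕ) : List ℕ :=
  List.ofFn fun i : Fin n => s i

/-- A ray of `T`: an infinite sequence of natural numbers all of whose finite
prefixes lie in `T`. -/
def IsRay (T : LFTree) (s : ℕ → ℕ) : Prop :=
  ∀ n : ℕ, pref s n ∈ T.carrier

/-- A cutset: a finite set of non-root vertices of `T` such that every ray has a
prefix in it, and no element is a (proper) prefix of another. -/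
def IsCutset (T : LFTree) (c : Finset (List ℕ)) : Prop :=
  (∀ σ ∈ c, σ ∈ T.carrier ∧ σ ≠ []) ∧
  (∀ s : ℕ → ℕ, T.IsRay s → ∃ σ ∈ c, ∃ n : ℕ, σ = pref s n) ∧
  (∀ σ ∈ c, ∀ τ ∈ c, σ <+: τ → σ = τ)

/-- The branching number of `T`:
`br T = inf {λ > 0 : inf over cutsets Π of Σ_{σ ∈ Π} λ^{-|σ|} = 0}`. -/
noncomputable def br (T : LFTree) : ℝ :=
  sInf {l : ℝ | 0 < l ∧ ∀ ε : ℝ, 0 < ε →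
    ∃ c : Finset (List ℕ), T.IsCutset c ∧ ∑ σ ∈ c, l ^ (-(σ.length : ℤ)) < ε}

/-- The set of non-root vertices of `T`, as a type. -/
def Vertex (T : LFTree) : Type :=
  {σ : List ℕ // σ ∈ T.carrier ∧ σ ≠ []}

/-- A flow on `T`: a nonnegative function on the non-root vertices (modeled as a
function on all finite sequences) satisfying the conservation law
`θ(σ) = Σ_{τ a child of σ in T} θ(τ)` at every non-root vertex `σ` of `T`. -/
def IsFlow (T : LFTree) (θ : List ℕ → ℝ) : Prop :=
  (∀ σ : List ℕ, σ ∈ T.carrier → σ ≠ [] → 0 ≤ θ σ) ∧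
  (∀ σ : List ℕ, σ ∈ T.carrier → σ ≠ [] →
    θ σ = ∑' n : {n : ℕ // σ ++ [n] ∈ T.carrier}, θ (σ ++ [n.1]))

/-- A flow is nonzero when the total flow out of the root is positive. -/
def FlowNonzero (T : LFTree) (θ : List ℕ → ℝ) : Prop :=
  0 < ∑' n : {n : ℕ // [n] ∈ T.carrier}, θ [n.1]

end LFTree

/-- `cumul Aσ σ ω = ∏_{0 < τ ≤ σ} A_τ(ω)`, the product of the values `A_τ`
over the non-root prefixes `τ` of `σ`. -/
noncomputable def cumul {Ω : Type*} (Aσ : List ℕ → Ω → ℝ) (σ : List ℕ) (ω : Ω) : ℝ :=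
  ∏ i ∈ Finset.range σ.length, Aσ (σ.take (i + 1)) ω

/-- `p = min_{0 ≤ x ≤ 1} E[A^x]`, the expectations taken in `[0,∞]`. -/
noncomputable def pval {Ω : Type*} [MeasurableSpace Ω] (μ : Measure Ω) (A : Ω → ℝ) : ℝ≥0∞ :=
  ⨅ x ∈ Set.Icc (0 : ℝ) 1, ∫⁻ ω, ENNReal.ofReal (A ω ^ x) ∂μ

/-!
The infimum defining `p` is attained at some `x ∈ [0, 1]`: by Fatou's lemma `x ↦ E[A^x]` is
lower semicontinuous. By independence `E[C_σ^x] = p^{|σ|}`, so `Σ_σ C_σ^x` has finite expectation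
and is almost surely finite. Then `C_σ^x < 1` for all but finitely many `σ`, and for those
`C_σ ≤ C_σ^x` because `x ≤ 1`.
-/

open Topology

lemma lowerSemicontinuous_lintegral {X α : Type*} [TopologicalSpace X] [FirstCountableTopology X]
    [MeasurableSpace α] {μ : Measure α} {f : X → α → ℝ≥0∞} (hf : ∀ x, Measurable (f x))
    (hlsc : ∀ᵐ a ∂μ, LowerSemicontinuous (f · a)) :
    LowerSemicontinuous fun x => ∫⁻ a, f x a ∂μ := by
  refine lowerSemicontinuous_iff_le_liminf.2 fun x => ?_
  calc ∫⁻ a, f x a ∂μ ≤ ∫⁻ a, liminf (f · a) (𝓝 x) ∂μ :=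
        lintegral_mono_ae (hlsc.mono fun a ha => ha.le_liminf x)
    _ ≤ liminf (fun y => ∫⁻ a, f y a ∂μ) (𝓝 x) := lintegral_liminf_le hf

lemma exists_pval_eq_lintegral_rpow {Ω : Type*} [MeasurableSpace Ω] {μ : Measure Ω}
    {A : Ω → ℝ} (hA : Measurable A) (hApos : ∀ᵐ ω ∂μ, 0 < A ω) :
    ∃ x ∈ Set.Icc (0 : ℝ) 1, pval μ A = ∫⁻ ω, ENNReal.ofReal (A ω ^ x) ∂μ := by
  have hlsc : LowerSemicontinuous fun x : ℝ => ∫⁻ ω, ENNReal.ofReal (A ω ^ x) ∂μ := by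
    refine lowerSemicontinuous_lintegral (fun x => by fun_prop) ?_
    filter_upwards [hApos] with ω hω
    exact (ENNReal.continuous_ofReal.comp
      (continuous_const.rpow continuous_id fun _ => Or.inl hω.ne')).lowerSemicontinuous
  obtain ⟨x, hx, hmin⟩ :=
    (hlsc.lowerSemicontinuousOn _).exists_isMinOn (Set.nonempty_Icc.2 zero_le_one) isCompact_Icc
  exact ⟨x, hx, le_antisymm (iInf₂_le x hx) (le_iInf₂ fun y hy => hmin hy)⟩

lemma lintegral_prod_ofReal_rpow_of_iIndepFun {ι Ω : Type*} [MeasurableSpace Ω] {μ : Measure Ω}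
    {A : Ω → ℝ} {X : ι → Ω → ℝ} (hX : ∀ i, Measurable (X i)) (hind : iIndepFun X μ)
    (hid : ∀ i, IdentDistrib (X i) A μ μ) (s : Finset ι) (x : ℝ) :
    ∫⁻ ω, ∏ i ∈ s, ENNReal.ofReal (X i ω ^ x) ∂μ
      = (∫⁻ ω, ENNReal.ofReal (A ω ^ x) ∂μ) ^ s.card := by
  have hφ : Measurable fun y : ℝ => ENNReal.ofReal (y ^ x) := by fun_prop
  rw [lintegral_prod_eq_prod_lintegral_of_indepFun s (fun i ω => ENNReal.ofReal (X i ω ^ x))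
    (hind.comp _ fun _ => hφ) fun i => hφ.comp (hX i)]
  exact Finset.prod_eq_pow_card fun i _ => ((hid i).comp hφ).lintegral_eq

lemma tsum_ofReal_ne_top_of_tsum_ofReal_rpow_ne_top {ι : Type*} {c : ι → ℝ} {x : ℝ}
    (hc : ∀ i, 0 ≤ c i) (hx : x ∈ Set.Icc (0 : ℝ) 1)
    (h : ∑' i, ENNReal.ofReal (c i ^ x) ≠ ∞) : ∑' i, ENNReal.ofReal (c i) ≠ ∞ := by
  have hsum : Summable fun i => c i ^ x := by
    simpa [ENNReal.toReal_ofReal (Real.rpow_nonneg (hc _) x)] using ENNReal.summable_toReal h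
  refine Summable.tsum_ofReal_ne_top (hsum.of_norm_bounded_eventually ?_)
  filter_upwards [hsum.tendsto_cofinite_zero.eventually (gt_mem_nhds one_pos)] with i hi
  have hc1 : c i ≤ 1 := le_of_not_gt fun h1 => (Real.one_le_rpow h1.le hx.1).not_gt hi
  rw [Real.norm_of_nonneg (hc i)]
  exact Real.self_le_rpow_of_le_one (hc i) hc1 hx.2

namespace LFTree

instance (T : LFTree) : Countable T.Vertex :=
  inferInstanceAs (Countable {σ : List ℕ // σ ∈ T.carrier ∧ σ ≠ []})

def Vertex.prefix {T : LFTree} (v : T.Vertex) (i : Fin v.1.length) : T.Vertex :=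
  ⟨v.1.take (i + 1), T.prefix_closed v.2.1 (List.take_prefix _ _), by simp [v.2.2]⟩

lemma Vertex.prefix_injective {T : LFTree} (v : T.Vertex) : Function.Injective v.prefix := by
  intro i j hij
  have hlen := congrArg (fun w : T.Vertex => w.1.length) hij
  simp only [Vertex.prefix, List.length_take] at hlen
  omega

lemma cumul_eq_prod_prefix {T : LFTree} {Ω : Type*} (Aσ : List ℕ → Ω → ℝ) (v : T.Vertex)
    (ω : Ω) : cumul Aσ v.1 ω = ∏ i, Aσ (v.prefix i).1 ω :=
  Finset.prod_range _

variable {T : LFTree} {Ω : Type*} {Aσ : List ℕ → Ω → ℝ} {ω : Ω}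

lemma cumul_nonneg (h : ∀ v : T.Vertex, 0 ≤ Aσ v.1 ω) (v : T.Vertex) : 0 ≤ cumul Aσ v.1 ω := by
  rw [cumul_eq_prod_prefix]
  exact Finset.prod_nonneg fun i _ => h _

lemma ofReal_cumul_rpow (h : ∀ v : T.Vertex, 0 ≤ Aσ v.1 ω) (v : T.Vertex) (x : ℝ) :
    ENNReal.ofReal (cumul Aσ v.1 ω ^ x) = ∏ i, ENNReal.ofReal (Aσ (v.prefix i).1 ω ^ x) := by
  rw [cumul_eq_prod_prefix]
  exact (congrArg ENNReal.ofReal (Real.finsetProd_rpow _ _ (fun i _ => h _) x).symm).trans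
    (ENNReal.ofReal_prod_of_nonneg fun i _ => Real.rpow_nonneg (h _) x)

end LFTree

theorem sum_C_lt_top_of_sum_p_lt_top_general
    (T : LFTree) {Ω : Type*} [MeasurableSpace Ω] (μ : Measure Ω)
    (A : Ω → ℝ) (hA : Measurable A) (hApos : ∀ᵐ ω ∂μ, 0 < A ω)
    (Aσ : List ℕ → Ω → ℝ) (hmeas : ∀ v : T.Vertex, Measurable (Aσ v.1))
    (hid : ∀ v : T.Vertex, IdentDistrib (Aσ v.1) A μ μ)
    (hind : iIndepFun (fun v : T.Vertex => Aσ v.1) μ)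
    (hsum : ∑' v : T.Vertex, (pval μ A) ^ v.1.length ≠ ∞) :
    ∀ᵐ ω ∂μ, ∑' v : T.Vertex, ENNReal.ofReal (cumul Aσ v.1 ω) < ∞ := by
  obtain ⟨x, hx, hp⟩ := exists_pval_eq_lintegral_rpow hA hApos
  set G : T.Vertex → Ω → ℝ≥0∞ := fun v ω => ∏ i, ENNReal.ofReal (Aσ (v.prefix i).1 ω ^ x)
  have hmean : ∀ v, ∫⁻ ω, G v ω ∂μ = pval μ A ^ v.1.length := fun v => by
    simpa [hp] using lintegral_prod_ofReal_rpow_of_iIndepFun (fun i => hmeas (v.prefix i))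
      (hind.precomp v.prefix_injective) (fun i => hid (v.prefix i)) Finset.univ x
  have hGmeas : ∀ v, Measurable (G v) := fun v => by fun_prop
  have hfin : ∀ᵐ ω ∂μ, ∑' v, G v ω ≠ ∞ := by
    refine (ae_lt_top (Measurable.tsum hGmeas) ?_).mono fun ω => ne_of_lt
    simpa [lintegral_tsum fun v => (hGmeas v).aemeasurable, hmean] using hsum
  have hnonneg : ∀ᵐ ω ∂μ, ∀ v : T.Vertex, 0 ≤ Aσ v.1 ω :=
    ae_all_iff.2 fun v => (hid v).symm.ae_snd measurableSet_Ici (hApos.mono fun _ => le_of_lt)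
  filter_upwards [hfin, hnonneg] with ω hω hω_nonneg
  refine (tsum_ofReal_ne_top_of_tsum_ofReal_rpow_ne_top (LFTree.cumul_nonneg hω_nonneg) hx ?_).lt_top
  simpa only [LFTree.ofReal_cumul_rpow hω_nonneg] using hω

/-- Part (3) of Theorem 1 (Lyons–Pemantle): if `Σ_{σ ≠ root} p^{|σ|} < ∞`, then
almost surely `Σ_{σ ≠ root} C_σ < ∞`. -/
theorem sum_C_lt_top_of_sum_p_lt_top
    (T : LFTree) {Ω : Type*} [MeasurableSpace Ω] (μ : Measure Ω) [IsProbabilityMeasure μ]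
    (A : Ω → ℝ) (hA : Measurable A) (hApos : ∀ᵐ ω ∂μ, 0 < A ω)
    (Aσ : List ℕ → Ω → ℝ) (hmeas : ∀ v : T.Vertex, Measurable (Aσ v.1))
    (hid : ∀ v : T.Vertex, IdentDistrib (Aσ v.1) A μ μ)
    (hind : iIndepFun (fun v : T.Vertex => Aσ v.1) μ)
    (hsum : ∑' v : T.Vertex, (pval μ A) ^ v.1.length ≠ ∞) :
    ∀ᵐ ω ∂μ, ∑' v : T.Vertex, ENNReal.ofReal (cumul Aσ v.1 ω) < ∞ :=
  sum_C_lt_top_of_sum_p_lt_top_general T μ A hA hApos Aσ hmeas hid hind hsum
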